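/- Let d ≥ 1 and D > 0, and let M be the normalized Maxwellian on ℝ^d. There exist constants r₀ > 0 and C > 0, depending only on d and D, such that for every ε > 0 and every measurable f : ℝ^d → [0,∞) with ρ := ∫_{ℝ^d} f(ξ) dξ ∈ (0,∞) and ∫_{ℝ^d} |ξ|² f(ξ) dξ < ∞, one has ∫_{ℝ^d} |ξ|² |f(ξ) − ρ M(ξ)| dξ ≤ r₀ ε² ∫_{ℝ^d} 𝒟(ξ) dξ + C ε ρ^{1/2} (∫_{ℝ^d} 𝒟(ξ) dξ)^{1/2}, the inequality being understood in [0,∞]. -/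

import Mathlib

open MeasureTheory
open scoped ENNReal Classical

/-- The normalized Maxwellian on `ℝ^d` with diffusion coefficient `D`:
`M(ξ) = (2πD)^{-d/2} exp(−|ξ|²/(2D))`. -/
noncomputable def maxwellian (d : ℕ) (D : ℝ) (ξ : EuclideanSpace ℝ (Fin d)) : ℝ :=
  (2 * Real.pi * D) ^ (-(d : ℝ) / 2) * Real.exp (-‖ξ‖ ^ 2 / (2 * D))

/-- The dissipation density `𝒟(ξ) = ε⁻² (f(ξ) − ρM(ξ))(log f(ξ) − log (ρM(ξ)))`, as a
`[0,∞]`-valued function: it is `+∞` at points where `f` vanishes but `ρM` does not,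
and given by the obvious formula elsewhere (in particular `0` where `f = ρM`). -/
noncomputable def dissipation (d : ℕ) (D ε ρ : ℝ) (f : EuclideanSpace ℝ (Fin d) → ℝ)
    (ξ : EuclideanSpace ℝ (Fin d)) : ℝ≥0∞ :=
  if f ξ = 0 ∧ ρ * maxwellian d D ξ ≠ 0 then ⊤
  else ENNReal.ofReal
    ((f ξ - ρ * maxwellian d D ξ) * (Real.log (f ξ) - Real.log (ρ * maxwellian d D ξ)) / ε ^ 2)

/-!
Write `m = ρ M(ξ)`, `P = (f - m)(log f - log m) = ε² 𝒟` and `t = |ξ|² / (4D)`. Pointwise, either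
`f ≤ m eᵗ`, and then `(f - m)² ≤ max(f, m) P ≤ m eᵗ P` because `log` has slope at least
`1 / max(f, m)` between `m` and `f`; or `log f - log m > t`, and then `t |f - m| ≤ P`. Hence
`|ξ|² |f - m| ≤ 4D P + (ρ W P)^{1/2}` with `W = |ξ|⁴ M e^{|ξ|²/(4D)}`, which still decays like a
Gaussian. Integrating and applying Cauchy–Schwarz to the second term gives the estimate with
`r₀ = 4D` and `C² ≈ ∫ W`.
-/

open Real
open scoped Nat

lemma sq_sub_le_max_mul_sub_mul_log_sub {a b : ℝ} (ha : 0 < a) (hb : 0 < b) :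
    (a - b) ^ 2 ≤ max a b * ((a - b) * (log a - log b)) := by
  wlog hba : b ≤ a generalizing a b
  · have := this hb ha (le_of_not_ge hba)
    rw [max_comm]
    convert this using 1 <;> ring
  have hlog : 1 - (a / b)⁻¹ ≤ log (a / b) := one_sub_inv_le_log_of_pos (by positivity)
  rw [log_div ha.ne' hb.ne', inv_div, one_sub_div ha.ne'] at hlog
  rw [max_eq_left hba]
  calc (a - b) ^ 2 = a * ((a - b) * ((a - b) / a)) := by field_simp
    _ ≤ a * ((a - b) * (log a - log b)) := by gcongr

lemma sub_mul_log_sub_nonneg {a b : ℝ} (ha : 0 < a) (hb : 0 < b) :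
    0 ≤ (a - b) * (log a - log b) :=
  nonneg_of_mul_nonneg_right ((sq_nonneg _).trans (sq_sub_le_max_mul_sub_mul_log_sub ha hb))
    (lt_max_of_lt_left ha)

lemma mul_abs_sub_le_sub_mul_log_sub_add_sqrt {a m t : ℝ} (ha : 0 < a) (hm : 0 < m)
    (ht : 0 ≤ t) :
    t * |a - m| ≤ (a - m) * (log a - log m) +
      √(t ^ 2 * (m * exp t) * ((a - m) * (log a - log m))) := by
  have hP := sub_mul_log_sub_nonneg ha hm
  rcases le_or_gt a (m * exp t) with hle | hlt
  · have hmax : max a m ≤ m * exp t := max_le hle (le_mul_of_one_le_right hm.le (one_le_exp ht))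
    have hsq : (t * |a - m|) ^ 2 ≤ t ^ 2 * (m * exp t) * ((a - m) * (log a - log m)) := by
      rw [mul_pow, sq_abs, mul_assoc]
      gcongr
      exact (sq_sub_le_max_mul_sub_mul_log_sub ha hm).trans (by gcongr)
    have := le_sqrt_of_sq_le hsq
    linarith
  · have hma : m < a := (le_mul_of_one_le_right hm.le (one_le_exp ht)).trans_lt hlt
    have hlog : t < log a - log m := by
      have := log_lt_log (by positivity) hlt
      rw [log_mul hm.ne' (exp_pos t).ne', log_exp] at this
      linarith
    rw [abs_of_pos (sub_pos.2 hma)]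
    have : t * (a - m) ≤ (a - m) * (log a - log m) := by
      rw [mul_comm]; gcongr
    linarith [sqrt_nonneg (t ^ 2 * (m * exp t) * ((a - m) * (log a - log m)))]

lemma integrable_norm_sq_pow_mul_exp_neg_mul_norm_sq {V : Type*} [NormedAddCommGroup V]
    [InnerProductSpace ℝ V] [FiniteDimensional ℝ V] [MeasurableSpace V] [BorelSpace V]
    (n : ℕ) {b : ℝ} (hb : 0 < b) :
    Integrable (fun v : V => (‖v‖ ^ 2) ^ n * exp (-b * ‖v‖ ^ 2)) := by
  have hgauss : Integrable (fun v : V => exp (-(b / 2) * ‖v‖ ^ 2)) :=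
    Integrable.of_integral_ne_zero (by
      rw [GaussianFourier.integral_rexp_neg_mul_sq_norm (by positivity)]; positivity)
  refine (hgauss.const_mul ((2 / b) ^ n * n !)).mono' (by fun_prop) (.of_forall fun v => ?_)
  have hmoment : (b / 2 * ‖v‖ ^ 2) ^ n * exp (-(b / 2 * ‖v‖ ^ 2)) ≤ n ! := by
    have := pow_div_factorial_le_exp _ (by positivity : 0 ≤ b / 2 * ‖v‖ ^ 2) n
    rwa [div_le_iff₀ (by positivity), ← div_le_iff₀' (exp_pos _), div_eq_mul_inv, ← exp_neg]
      at this
  have hcancel : 2 / b * (b / 2) = 1 := by field_simp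
  rw [norm_of_nonneg (by positivity)]
  calc (‖v‖ ^ 2) ^ n * exp (-b * ‖v‖ ^ 2)
      = (2 / b) ^ n * ((b / 2 * ‖v‖ ^ 2) ^ n * exp (-(b / 2 * ‖v‖ ^ 2))) *
          exp (-(b / 2) * ‖v‖ ^ 2) := by
        rw [← mul_assoc, mul_assoc _ (exp _), ← exp_add, ← mul_pow, ← mul_assoc, hcancel,
          one_mul]
        ring_nf
    _ ≤ (2 / b) ^ n * n ! * exp (-(b / 2) * ‖v‖ ^ 2) := by gcongr

lemma ENNReal.lintegral_rpow_half_mul_rpow_half_le {α : Type*} [MeasurableSpace α]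
    (μ : Measure α) {f g : α → ℝ≥0∞} (hf : AEMeasurable f μ) (hg : AEMeasurable g μ) :
    ∫⁻ a, f a ^ (1 / 2 : ℝ) * g a ^ (1 / 2 : ℝ) ∂μ ≤
      (∫⁻ a, f a ∂μ) ^ (1 / 2 : ℝ) * (∫⁻ a, g a ∂μ) ^ (1 / 2 : ℝ) := by
  have hsq : ∀ x : ℝ≥0∞, (x ^ (1 / 2 : ℝ)) ^ (2 : ℝ) = x := fun x => by
    rw [← ENNReal.rpow_mul]; norm_num
  simpa only [hsq, Pi.mul_apply] using ENNReal.lintegral_mul_le_Lp_mul_Lq μ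
    Real.HolderConjugate.two_two (hf.pow_const (1 / 2 : ℝ)) (hg.pow_const (1 / 2 : ℝ))

section Maxwellian

variable {d : ℕ} {D : ℝ}

lemma maxwellian_pos (hD : 0 < D) (ξ : EuclideanSpace ℝ (Fin d)) : 0 < maxwellian d D ξ := by
  unfold maxwellian; positivity

lemma measurable_maxwellian : Measurable (maxwellian d D) := by
  unfold maxwellian; fun_prop

lemma measurable_dissipation {ε ρ : ℝ} {f : EuclideanSpace ℝ (Fin d) → ℝ} (hf : Measurable f) :
    Measurable (dissipation d D ε ρ f) := by
  have hM := measurable_maxwellian (d := d) (D := D)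
  unfold dissipation
  refine Measurable.ite ?_ measurable_const (by fun_prop)
  exact (measurableSet_eq_fun hf measurable_const).inter
    (measurableSet_eq_fun (hM.const_mul ρ) measurable_const).compl

lemma dissipation_of_eq_zero (hD : 0 < D) {ε ρ : ℝ} (hρ : 0 < ρ)
    {f : EuclideanSpace ℝ (Fin d) → ℝ} {ξ : EuclideanSpace ℝ (Fin d)} (hf : f ξ = 0) :
    dissipation d D ε ρ f ξ = ⊤ :=
  if_pos ⟨hf, (mul_pos hρ (maxwellian_pos hD ξ)).ne'⟩

lemma dissipation_of_ne_zero {ε ρ : ℝ} {f : EuclideanSpace ℝ (Fin d) → ℝ}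
    {ξ : EuclideanSpace ℝ (Fin d)} (hf : f ξ ≠ 0) :
    dissipation d D ε ρ f ξ = ENNReal.ofReal ((f ξ - ρ * maxwellian d D ξ) *
      (log (f ξ) - log (ρ * maxwellian d D ξ)) / ε ^ 2) :=
  if_neg fun h => hf h.1

noncomputable def momentWeight (d : ℕ) (D : ℝ) (ξ : EuclideanSpace ℝ (Fin d)) : ℝ :=
  (2 * π * D) ^ (-(d : ℝ) / 2) * ((‖ξ‖ ^ 2) ^ 2 * exp (-(1 / (4 * D)) * ‖ξ‖ ^ 2))

lemma momentWeight_eq (ξ : EuclideanSpace ℝ (Fin d)) :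
    momentWeight d D ξ = (‖ξ‖ ^ 2) ^ 2 * (maxwellian d D ξ * exp (‖ξ‖ ^ 2 / (4 * D))) := by
  unfold maxwellian momentWeight
  rw [mul_assoc _ (exp _), ← exp_add]
  ring_nf

lemma momentWeight_nonneg (hD : 0 < D) (ξ : EuclideanSpace ℝ (Fin d)) :
    0 ≤ momentWeight d D ξ := by
  unfold momentWeight; positivity

lemma integrable_momentWeight (hD : 0 < D) : Integrable (momentWeight d D) :=
  (integrable_norm_sq_pow_mul_exp_neg_mul_norm_sq 2 (by positivity)).const_mul _

lemma norm_sq_mul_abs_sub_maxwellian_le (hD : 0 < D) {ρ a : ℝ} (hρ : 0 < ρ) (ha : 0 < a)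
    (ξ : EuclideanSpace ℝ (Fin d)) :
    ‖ξ‖ ^ 2 * |a - ρ * maxwellian d D ξ| ≤
      4 * D * ((a - ρ * maxwellian d D ξ) * (log a - log (ρ * maxwellian d D ξ))) +
        √(ρ * momentWeight d D ξ *
          ((a - ρ * maxwellian d D ξ) * (log a - log (ρ * maxwellian d D ξ)))) := by
  have key := mul_abs_sub_le_sub_mul_log_sub_add_sqrt ha (mul_pos hρ (maxwellian_pos hD ξ))
    (by positivity : 0 ≤ ‖ξ‖ ^ 2 / (4 * D))
  have hweight : ∀ P, (4 * D) ^ 2 * ((‖ξ‖ ^ 2 / (4 * D)) ^ 2 *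
      (ρ * maxwellian d D ξ * exp (‖ξ‖ ^ 2 / (4 * D))) * P) = ρ * momentWeight d D ξ * P := by
    intro P
    rw [momentWeight_eq]
    field_simp
  set m := ρ * maxwellian d D ξ
  set P := (a - m) * (log a - log m)
  calc ‖ξ‖ ^ 2 * |a - m| = 4 * D * (‖ξ‖ ^ 2 / (4 * D) * |a - m|) := by field_simp
    _ ≤ 4 * D * (P + √((‖ξ‖ ^ 2 / (4 * D)) ^ 2 * (m * exp (‖ξ‖ ^ 2 / (4 * D))) * P)) := by
      gcongr
    _ = 4 * D * P + √(ρ * momentWeight d D ξ * P) := by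
      rw [← hweight, sqrt_mul (by positivity : (0 : ℝ) ≤ (4 * D) ^ 2), sqrt_sq (by positivity)]
      ring

lemma ofReal_norm_sq_mul_abs_sub_maxwellian_le (hD : 0 < D) {ε ρ : ℝ} (hε : 0 < ε) (hρ : 0 < ρ)
    {f : EuclideanSpace ℝ (Fin d) → ℝ} {ξ : EuclideanSpace ℝ (Fin d)} (hf : 0 ≤ f ξ) :
    ENNReal.ofReal (‖ξ‖ ^ 2 * |f ξ - ρ * maxwellian d D ξ|) ≤
      ENNReal.ofReal (4 * D * ε ^ 2) * dissipation d D ε ρ f ξ +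
        ENNReal.ofReal (ε ^ 2 * ρ * momentWeight d D ξ) ^ (1 / 2 : ℝ) *
          dissipation d D ε ρ f ξ ^ (1 / 2 : ℝ) := by
  rcases hf.eq_or_lt with hf0 | hfpos
  · rw [dissipation_of_eq_zero hD hρ hf0.symm, ENNReal.mul_top (by simp; positivity), top_add]
    exact le_top
  have hm := mul_pos hρ (maxwellian_pos hD ξ)
  have hP := sub_mul_log_sub_nonneg hfpos hm
  have hw := momentWeight_nonneg hD ξ
  rw [dissipation_of_ne_zero hfpos.ne', ← ENNReal.ofReal_mul (by positivity),
    ENNReal.ofReal_rpow_of_nonneg (by positivity) (by norm_num),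
    ENNReal.ofReal_rpow_of_nonneg (by positivity) (by norm_num), ← sqrt_eq_rpow, ← sqrt_eq_rpow,
    ← ENNReal.ofReal_mul (by positivity), ← sqrt_mul (by positivity),
    ← ENNReal.ofReal_add (by positivity) (by positivity)]
  refine ENNReal.ofReal_le_ofReal ((norm_sq_mul_abs_sub_maxwellian_le hD hρ hfpos ξ).trans_eq ?_)
  congr 1
  · field_simp
  · congr 1; field_simp

lemma lintegral_ofReal_mul_momentWeight_rpow_half_mul_le (hD : 0 < D) {k : ℝ} (hk : 0 ≤ k)
    {g : EuclideanSpace ℝ (Fin d) → ℝ≥0∞} (hg : AEMeasurable g) :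
    ∫⁻ ξ, ENNReal.ofReal (k * momentWeight d D ξ) ^ (1 / 2 : ℝ) * g ξ ^ (1 / 2 : ℝ) ≤
      ENNReal.ofReal (√k * √(∫ ξ, momentWeight d D ξ)) * (∫⁻ ξ, g ξ) ^ (1 / 2 : ℝ) := by
  have hint := (integrable_momentWeight hD (d := d)).const_mul k
  have hnonneg : ∀ ξ, 0 ≤ k * momentWeight d D ξ :=
    fun ξ => mul_nonneg hk (momentWeight_nonneg hD ξ)
  refine (ENNReal.lintegral_rpow_half_mul_rpow_half_le _ hint.aemeasurable.ennreal_ofReal hg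
    ).trans_eq ?_
  rw [← ofReal_integral_eq_lintegral_ofReal hint (.of_forall hnonneg),
    ENNReal.ofReal_rpow_of_nonneg (integral_nonneg hnonneg) (by norm_num), ← sqrt_eq_rpow,
    integral_const_mul, sqrt_mul hk]

end Maxwellian

theorem second_moment_estimate_general (d : ℕ) (D : ℝ) (hD : 0 < D) :
    ∃ r₀ > (0 : ℝ), ∃ C > (0 : ℝ),
      ∀ ε : ℝ, 0 < ε →
      ∀ f : EuclideanSpace ℝ (Fin d) → ℝ, Measurable f → (∀ ξ, 0 ≤ f ξ) →
        Integrable f → 0 < ∫ ξ, f ξ →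
        Integrable (fun ξ => ‖ξ‖ ^ 2 * f ξ) →
        (∫⁻ ξ, ENNReal.ofReal (‖ξ‖ ^ 2 * |f ξ - (∫ η, f η) * maxwellian d D ξ|)) ≤
          ENNReal.ofReal (r₀ * ε ^ 2) * (∫⁻ ξ, dissipation d D ε (∫ η, f η) f ξ) +
            ENNReal.ofReal (C * ε * Real.sqrt (∫ η, f η)) *
              (∫⁻ ξ, dissipation d D ε (∫ η, f η) f ξ) ^ (1 / 2 : ℝ) := by
  set J := ∫ ξ, momentWeight d D ξ
  refine ⟨4 * D, by positivity, √J + 1, by positivity, fun ε hε f hfm hf0 _ hρ _ => ?_⟩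
  set ρ := ∫ η, f η
  set 𝒟 := dissipation d D ε ρ f
  have h𝒟 : Measurable 𝒟 := measurable_dissipation hfm
  have hconst : √(ε ^ 2 * ρ) * √J ≤ (√J + 1) * ε * √ρ := by
    rw [sqrt_mul (sq_nonneg ε), sqrt_sq hε.le]
    nlinarith [mul_pos hε (sqrt_pos.2 hρ)]
  calc ∫⁻ ξ, ENNReal.ofReal (‖ξ‖ ^ 2 * |f ξ - ρ * maxwellian d D ξ|)
      ≤ ∫⁻ ξ, (ENNReal.ofReal (4 * D * ε ^ 2) * 𝒟 ξ +
          ENNReal.ofReal (ε ^ 2 * ρ * momentWeight d D ξ) ^ (1 / 2 : ℝ) * 𝒟 ξ ^ (1 / 2 : ℝ)) :=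
        lintegral_mono fun ξ => ofReal_norm_sq_mul_abs_sub_maxwellian_le hD hε hρ (hf0 ξ)
    _ = ENNReal.ofReal (4 * D * ε ^ 2) * (∫⁻ ξ, 𝒟 ξ) + ∫⁻ ξ,
          ENNReal.ofReal (ε ^ 2 * ρ * momentWeight d D ξ) ^ (1 / 2 : ℝ) * 𝒟 ξ ^ (1 / 2 : ℝ) := by
        rw [lintegral_add_left (h𝒟.const_mul _), lintegral_const_mul _ h𝒟]
    _ ≤ _ := by
        grw [lintegral_ofReal_mul_momentWeight_rpow_half_mul_le hD (by positivity)
          h𝒟.aemeasurable, hconst]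

/-- estimate on the second moment of `f − ρM`: there are constants
`r₀, C > 0` depending only on `d` and `D` such that for every `ε > 0` and nonnegative
measurable `f` with `ρ := ∫ f ∈ (0,∞)` and `∫ |ξ|² f < ∞`,
`∫ |ξ|² |f − ρM| dξ ≤ r₀ ε² ∫ 𝒟 + C ε ρ^{1/2} (∫ 𝒟)^{1/2}` in `[0,∞]`. -/
theorem second_moment_estimate (d : ℕ) (hd : 1 ≤ d) (D : ℝ) (hD : 0 < D) :
    ∃ r₀ > (0 : ℝ), ∃ C > (0 : ℝ),
      ∀ ε : ℝ, 0 < ε →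
      ∀ f : EuclideanSpace ℝ (Fin d) → ℝ, Measurable f → (∀ ξ, 0 ≤ f ξ) →
        Integrable f → 0 < ∫ ξ, f ξ →
        Integrable (fun ξ => ‖ξ‖ ^ 2 * f ξ) →
        (∫⁻ ξ, ENNReal.ofReal (‖ξ‖ ^ 2 * |f ξ - (∫ η, f η) * maxwellian d D ξ|)) ≤
          ENNReal.ofReal (r₀ * ε ^ 2) * (∫⁻ ξ, dissipation d D ε (∫ η, f η) f ξ) +
            ENNReal.ofReal (C * ε * Real.sqrt (∫ η, f η)) *
              (∫⁻ ξ, dissipation d D ε (∫ η, f η) f ξ) ^ (1 / 2 : ℝ) :=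
  second_moment_estimate_general d D hD
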